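/- arXiv:2310.10278 — 5 statements merged into one kernel-verified Lean document; each statement's English description precedes it below -/
import Mathlib

section
/- For the Pauli group G_n and a subgroup S of G_n, the normaliser of S in G_n equals the centraliser of S in G_n. -/
/-- For the Pauli group (modelled abstractly: a group with a central element `z ≠ 1`
with `z ^ 2 = 1` playing the role of `-I`, in which any two elements either commute
or anticommute) and a subgroup `S` not containing `z` (e.g. a stabiliser group),
the normaliser of `S` equals the centraliser of `S`. -/
theorem normalizer_eq_centralizer_of_pauli
    {G : Type*} [Group G] (z : G) (hz1 : z ≠ 1) (hz2 : z ^ 2 = 1)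
    (hzc : ∀ g : G, z * g = g * z)
    (hcomm : ∀ a b : G, a * b = b * a ∨ a * b = z * (b * a))
    (S : Subgroup G) (hzS : z ∉ S) :
    Subgroup.normalizer (S : Set G) = Subgroup.centralizer (S : Set G) := by
  apply le_antisymm
  · intro g hg
    rw [Subgroup.mem_normalizer_iff] at hg
    rw [Subgroup.mem_centralizer_iff]
    intro s hs
    rcases hcomm g s with h | h
    · exact h.symm
    · exfalso
      have h1 : g * s * g⁻¹ ∈ S := (hg s).mp hs
      have h2 : g * s * g⁻¹ = z * s := by rw [h]; group
      rw [h2] at h1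
      have hzmem : z ∈ S := by
        have := S.mul_mem h1 (S.inv_mem hs)
        simpa using this
      exact hzS hzmem
  · intro g hg
    rw [Subgroup.mem_centralizer_iff] at hg
    rw [Subgroup.mem_normalizer_iff]
    intro s
    constructor
    · intro hs
      have h : g * s * g⁻¹ = s := by rw [← hg s hs]; group
      rwa [h]
    · intro hs
      have hg' := hg _ hs
      have h1 : s = g⁻¹ * (g * s * g⁻¹ * g) := by group
      rw [hg'] at h1
      have h2 : g⁻¹ * (g * (g * s * g⁻¹)) = g * s * g⁻¹ := by group
      rw [h2] at h1
      rwa [h1]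
end

section
/- If the strong error transmuting condition E_j† E_k ∈ (G_n \ N(S)) ∪ M holds for all pairs in an error set E (with M ⊆ N(S) a set of cosets of S containing S, not necessarily a subgroup), then for each syndrome coset of N(S) there exists a map π from the errors in that coset to the cosets M/S-classes in M such that E_i† E_j and π(E_i)† π(E_j) determine the same element of N(S)/S for all i, j in that coset; namely π(E_1) = S (identity class) and π(E_j) = class of E_1† E_j. -/
/-- The strong error transmuting condition (with `M` merely a union of cosets of `S`
inside `N(S)` containing `S`, not necessarily a subgroup) implies the general QET
condition: in each syndrome coset there is a map `π` into `M` matching the bilinears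
up to the stabiliser, with `π E₁` the identity class and `π E_j` the class of
`E₁⁻¹ E_j`. -/
theorem strong_qet_implies_general_qet
    {G : Type*} [Group G] (S : Subgroup G) (M : Set G)
    (hSM : (S : Set G) ⊆ M)
    (hMN : M ⊆ (Subgroup.centralizer (S : Set G) : Set G))
    (hcoset : ∀ a ∈ M, ∀ s ∈ S, a * s ∈ M)
    (m : ℕ) (f : G → Fin m → ZMod 2)
    (hhom : ∀ E F : G, f (E * F) = f E + f F)
    (hker : ∀ E : G, f E = 0 ↔ E ∈ Subgroup.centralizer (S : Set G))
    (Err : Set G)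
    (hcond : ∀ Ej ∈ Err, ∀ Ek ∈ Err,
      Ej⁻¹ * Ek ∈ ((Subgroup.centralizer (S : Set G) : Set G))ᶜ ∪ M) :
    ∀ E₁ ∈ Err, ∃ π : G → G,
      (π E₁ ∈ S) ∧
      (∀ e ∈ Err, f e = f E₁ → π e ∈ M) ∧
      (∀ Ei ∈ Err, ∀ Ej ∈ Err, f Ei = f E₁ → f Ej = f E₁ →
        ((π Ei)⁻¹ * π Ej)⁻¹ * (Ei⁻¹ * Ej) ∈ S) := by
  intro E₁ hE₁
  refine ⟨fun e => E₁⁻¹ * e, by simpa using S.one_mem, ?_, ?_⟩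
  · intro e he hfe
    have h0 : f (E₁⁻¹ * e) = 0 := by
      have h1 : f (E₁ * (E₁⁻¹ * e)) = f E₁ + f (E₁⁻¹ * e) := hhom _ _
      simp only [mul_inv_cancel_left] at h1
      have := h1.symm
      rw [hfe] at this
      linear_combination (norm := abel) this
    have hcent : E₁⁻¹ * e ∈ Subgroup.centralizer (S : Set G) := (hker _).mp h0
    rcases hcond E₁ hE₁ e he with h | h
    · exact absurd hcent h
    · exact h
  · intro Ei hEi Ej hEj _ _
    have : ((E₁⁻¹ * Ei)⁻¹ * (E₁⁻¹ * Ej))⁻¹ * (Ei⁻¹ * Ej) = 1 := by group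
    rw [this]; exact S.one_mem
end

section
/- Let M̄ be a subgroup of N(S)/S and suppose the general QET condition holds: for every pair E_i, E_j in the same coset of N(S), the class of E_i† E_j in N(S)/S lies in M̄ (taking i fixed as a reference). Then the strong condition holds: for all pairs E_j, E_k in the error set, E_j† E_k ∈ (G_n \ N(S)) ∪ M, where M is the preimage of M̄ in N(S). -/
section AdditiveSyndrome

variable {G A : Type*} [Group G] [AddGroup A] (f : G → A)

theorem map_inv_mul_of_map_mul_eq_add (hf : ∀ x y : G, f (x * y) = f x + f y) (a b : G) :
    f (a⁻¹ * b) = -f a + f b :=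
  eq_neg_add_of_add_eq <| by rw [← hf, mul_inv_cancel_left]

theorem map_inv_mul_eq_zero_iff_of_map_mul_eq_add (hf : ∀ x y : G, f (x * y) = f x + f y)
    (a b : G) : f (a⁻¹ * b) = 0 ↔ f a = f b := by
  rw [map_inv_mul_of_map_mul_eq_add f hf, neg_add_eq_zero]

end AdditiveSyndrome

theorem general_qet_implies_strong_qet_of_group_general
    {G : Type*} [Group G] (S M : Subgroup G)
    (m : ℕ) (f : G → Fin m → ZMod 2)
    (hhom : ∀ E F : G, f (E * F) = f E + f F)
    (hker : ∀ E : G, f E = 0 ↔ E ∈ Subgroup.centralizer (S : Set G))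
    (Err : Set G)
    (hgen : ∀ Ei ∈ Err, ∀ Ej ∈ Err, f Ei = f Ej → Ei⁻¹ * Ej ∈ M) :
    ∀ Ej ∈ Err, ∀ Ek ∈ Err,
      Ej⁻¹ * Ek ∈ ((Subgroup.centralizer (S : Set G) : Set G))ᶜ ∪ (M : Set G) := by
  intro Ej hEj Ek hEk
  by_cases hsyn : f Ej = f Ek
  · exact Or.inr (hgen Ej hEj Ek hEk hsyn)
  · refine Or.inl fun hcent => hsyn ?_
    exact (map_inv_mul_eq_zero_iff_of_map_mul_eq_add f hhom Ej Ek).mp ((hker _).mpr hcent)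

/-- When the admissible error set is a group, the general QET condition implies the
strong condition: if every pair of errors with the same syndrome has product
`E_i⁻¹ E_j` in `M` (the preimage in `N(S)` of a subgroup `M̄ ≤ N(S)/S`), then for
every pair of errors `E_j⁻¹ E_k ∈ (G \ N(S)) ∪ M`. -/
theorem general_qet_implies_strong_qet_of_group
    {G : Type*} [Group G] (S M : Subgroup G)
    (hSM : S ≤ M) (hMN : M ≤ Subgroup.centralizer (S : Set G))
    (m : ℕ) (f : G → Fin m → ZMod 2)
    (hhom : ∀ E F : G, f (E * F) = f E + f F)
    (hker : ∀ E : G, f E = 0 ↔ E ∈ Subgroup.centralizer (S : Set G))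
    (Err : Set G)
    (hgen : ∀ Ei ∈ Err, ∀ Ej ∈ Err, f Ei = f Ej → Ei⁻¹ * Ej ∈ M) :
    ∀ Ej ∈ Err, ∀ Ek ∈ Err,
      Ej⁻¹ * Ek ∈ ((Subgroup.centralizer (S : Set G) : Set G))ᶜ ∪ (M : Set G) :=
  general_qet_implies_strong_qet_of_group_general S M m f hhom hker Err hgen
end

section
/- For the seven-qubit stabiliser code with stabiliser generators S = {XXYYZIZ, IZXYYXY, IIIIIZZ, ZZIIZIZ, ZZZZIII}: (a) the five generators pairwise commute; (b) every weight-one Pauli error anticommutes with at least one generator (i.e. has nonzero syndrome); (c) each of Z₁Z₂, Z₃Z₄, Z₅Z₆, Z₅Z₇ commutes with all five generators (lies in N(S)). -/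
/-! Pauli strings are represented symplectically: a qubit carries an element of
`ZMod 2 × ZMod 2`, with `I = (0,0)`, `X = (1,0)`, `Y = (1,1)`, `Z = (0,1)`.
Two Pauli strings commute iff the symplectic form vanishes, which is exactly the
parity of positions where they carry distinct non-identity Paulis. -/

abbrev PauliStr (n : ℕ) := Fin n → ZMod 2 × ZMod 2

/-- Symplectic form: `0` iff the two Pauli strings commute. -/
def sympl {n : ℕ} (a b : PauliStr n) : ZMod 2 :=
  ∑ i, ((a i).1 * (b i).2 + (a i).2 * (b i).1)

def pI : ZMod 2 × ZMod 2 := (0, 0)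
def pX : ZMod 2 × ZMod 2 := (1, 0)
def pY : ZMod 2 × ZMod 2 := (1, 1)
def pZ : ZMod 2 × ZMod 2 := (0, 1)

/-- The Pauli string with `p` on qubit `i` and identity elsewhere. -/
def single {n : ℕ} (i : Fin n) (p : ZMod 2 × ZMod 2) : PauliStr n :=
  fun j => if j = i then p else 0

/-- Generators of the stabiliser of the seven qubit code:
`XXYYZIZ, IZXYYXY, IIIIIZZ, ZZIIZIZ, ZZZZIII`. -/
def gens7 : Fin 5 → PauliStr 7 :=
  ![![pX, pX, pY, pY, pZ, pI, pZ],
    ![pI, pZ, pX, pY, pY, pX, pY],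
    ![pI, pI, pI, pI, pI, pZ, pZ],
    ![pZ, pZ, pI, pI, pZ, pI, pZ],
    ![pZ, pZ, pZ, pZ, pI, pI, pI]]

/-- (a) the five generators pairwise commute; (b) every weight-one Pauli error
anticommutes with at least one generator (nonzero syndrome); (c) each of
`Z₁Z₂, Z₃Z₄, Z₅Z₆, Z₅Z₇` commutes with all five generators (lies in `N(S)`). -/
theorem seven_qubit_code_properties :
    (∀ l m : Fin 5, sympl (gens7 l) (gens7 m) = 0) ∧
    (∀ i : Fin 7, ∀ p : ZMod 2 × ZMod 2, p ≠ 0 →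
      ∃ l : Fin 5, sympl (single i p) (gens7 l) ≠ 0) ∧
    (∀ op ∈ ({single 0 pZ + single 1 pZ, single 2 pZ + single 3 pZ,
               single 4 pZ + single 5 pZ, single 4 pZ + single 6 pZ} :
        Set (PauliStr 7)),
      ∀ l : Fin 5, sympl op (gens7 l) = 0) := by
  refine ⟨by decide, by decide, ?_⟩
  intro op hop l
  simp only [Set.mem_insert_iff, Set.mem_singleton_iff] at hop
  rcases hop with rfl | rfl | rfl | rfl <;> revert l <;> decide
end

section
/- For the six-qubit stabiliser code with generators {YXZIXX, ZIXXXX, ZZZZII, ZZIIZZ}: (a) the generators pairwise commute; (b) every single-qubit Pauli error has nonzero syndrome; (c) the weight-two operators Z₁Z₂, Z₃Z₄, Z₅Z₆, X₅X₆, Y₅Y₆ all commute with all four generators. -/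
/-- Generators of the six qubit code: `YXZIXX, ZIXXXX, ZZZZII, ZZIIZZ`. -/
def gens6 : Fin 4 → PauliStr 6 :=
  ![![pY, pX, pZ, pI, pX, pX],
    ![pZ, pI, pX, pX, pX, pX],
    ![pZ, pZ, pZ, pZ, pI, pI],
    ![pZ, pZ, pI, pI, pZ, pZ]]

/-- (a) the generators pairwise commute; (b) every single-qubit Pauli error has
nonzero syndrome; (c) the weight-two operators `Z₁Z₂, Z₃Z₄, Z₅Z₆, X₅X₆, Y₅Y₆`
commute with all four generators. -/
theorem six_qubit_code_properties :
    (∀ l m : Fin 4, sympl (gens6 l) (gens6 m) = 0) ∧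
    (∀ i : Fin 6, ∀ p : ZMod 2 × ZMod 2, p ≠ 0 →
      ∃ l : Fin 4, sympl (single i p) (gens6 l) ≠ 0) ∧
    (∀ op ∈ ({single 0 pZ + single 1 pZ, single 2 pZ + single 3 pZ,
               single 4 pZ + single 5 pZ, single 4 pX + single 5 pX,
               single 4 pY + single 5 pY} : Set (PauliStr 6)),
      ∀ l : Fin 4, sympl op (gens6 l) = 0) := by
  refine ⟨by decide, by decide, ?_⟩
  intro op hop l
  simp only [Set.mem_insert_iff, Set.mem_singleton_iff] at hop
  rcases hop with h | h | h | h | h <;> subst h <;> revert l <;> decide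
end
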